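/- arXiv:2510.25567 — 3 statements merged into one kernel-verified Lean document; each statement's English description precedes it below -/
import Mathlib

section
/- Let A be a closed convex subset of the plane ℝ², let g be a point with g ∉ A, and let O ⊆ ℝ² be a set of obstacle points satisfying O ∩ interior(A) = ∅. If for every boundary point q ∈ frontier(A) the closed segment from g to q is disjoint from O (i.e., g sees the entire boundary of A), then for every point p ∈ A the closed segment from g to p is disjoint from O (i.e., g sees every point of A). -/
/-! A point `x` of `[g, p]` that is not interior to `A` lies on a segment from `g` to a
boundary point: to `x` itself if `x ∈ closure A`, and otherwise to a boundary point `q` of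
`[x, p]`, which exists because `[x, p]` is connected and runs from outside `A` to `p ∈ A`.
So an obstacle on `[g, p]` would already lie on some `[g, q]` with `q ∈ frontier A`. -/

open Set

theorem IsPreconnected.inter_frontier_nonempty {X : Type*} [TopologicalSpace X] {s t : Set X}
    (hs : IsPreconnected s) (hst : (s ∩ t).Nonempty) (hsdt : (s \ t).Nonempty) :
    (s ∩ frontier t).Nonempty := by
  by_contra! h
  have hcover : s ⊆ interior t ∪ (closure t)ᶜ := fun y hys => by
    by_cases hyi : y ∈ interior t
    · exact Or.inl hyi
    · exact Or.inr fun hyc => h.subset ⟨hys, hyc, hyi⟩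
  have hdisj : Disjoint (interior t) (closure t)ᶜ :=
    disjoint_compl_right.mono_left interior_subset_closure
  rcases hs.subset_or_subset isOpen_interior isClosed_closure.isOpen_compl hdisj hcover
    with hint | hext
  · obtain ⟨y, hys, hyt⟩ := hsdt
    exact hyt (interior_subset (hint hys))
  · obtain ⟨y, hys, hyt⟩ := hst
    exact hext hys (subset_closure hyt)

theorem exists_mem_frontier_mem_segment {E : Type*} [AddCommGroup E] [Module ℝ E]
    [TopologicalSpace E] [ContinuousAdd E] [ContinuousSMul ℝ E] {A : Set E} {g p x : E}
    (hp : p ∈ A) (hx : x ∈ segment ℝ g p) (hxA : x ∉ interior A) :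
    ∃ q ∈ frontier A, x ∈ segment ℝ g q := by
  by_cases hxc : x ∈ closure A
  · exact ⟨x, ⟨hxc, hxA⟩, right_mem_segment ℝ g x⟩
  obtain ⟨q, hq, hqA⟩ := (convex_segment x p).isPreconnected.inter_frontier_nonempty
    ⟨p, right_mem_segment ℝ x p, hp⟩ ⟨x, left_mem_segment ℝ x p, fun h => hxc (subset_closure h)⟩
  exact ⟨q, hqA,
    ((mem_segment_iff_wbtw.1 hx).trans_right_left (mem_segment_iff_wbtw.1 hq)).mem_segment⟩

theorem boundary_guarding_general
    (A : Set (EuclideanSpace ℝ (Fin 2)))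
    (g : EuclideanSpace ℝ (Fin 2))
    (O : Set (EuclideanSpace ℝ (Fin 2))) (hO : O ∩ interior A = ∅)
    (hsee : ∀ q ∈ frontier A, segment ℝ g q ∩ O = ∅) :
    ∀ p ∈ A, segment ℝ g p ∩ O = ∅ := by
  intro p hp
  refine eq_empty_of_forall_notMem fun x ⟨hx, hxO⟩ => ?_
  have hxA : x ∉ interior A := fun hxi => hO.subset ⟨hxO, hxi⟩
  obtain ⟨q, hq, hxq⟩ := exists_mem_frontier_mem_segment hp hx hxA
  exact (hsee q hq).subset ⟨hxq, hxO⟩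

/-- Lemma 3 (boundary guarding): a guard `g` outside a closed convex set `A` in the
plane that sees the entire boundary of `A` (segments to boundary points avoid the
obstacle set `O`, where `O` does not meet the interior of `A`) sees every point of `A`. -/
theorem boundary_guarding
    (A : Set (EuclideanSpace ℝ (Fin 2))) (hA : Convex ℝ A) (hAclosed : IsClosed A)
    (g : EuclideanSpace ℝ (Fin 2)) (hg : g ∉ A)
    (O : Set (EuclideanSpace ℝ (Fin 2))) (hO : O ∩ interior A = ∅)
    (hsee : ∀ q ∈ frontier A, segment ℝ g q ∩ O = ∅) :
    ∀ p ∈ A, segment ℝ g p ∩ O = ∅ :=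
  boundary_guarding_general A g O hO hsee
end

section
/- Let A be a closed convex subset of the plane ℝ², let g be a point with g ∉ A, let k be a natural number, and let E be a finite family of obstacle sets in ℝ², each member of which is disjoint from interior(A). If for every boundary point q ∈ frontier(A) at most k members of E intersect the closed segment from g to q (i.e., g k-sees the entire boundary of A), then for every point p ∈ A at most k members of E intersect the closed segment from g to p (i.e., g k-sees every point of A). -/
open Classical in
/-- k-visibility boundary guarding: a guard `g` outside a closed convex set `A` in the
plane that `k`-sees the entire boundary of `A` (at most `k` obstacle sets from the
finite family `E` meet each segment to a boundary point, where each member of `E`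
is disjoint from the interior of `A`) `k`-sees every point of `A`. -/
theorem k_visibility_boundary_guarding
    (A : Set (EuclideanSpace ℝ (Fin 2))) (hA : Convex ℝ A) (hAclosed : IsClosed A)
    (g : EuclideanSpace ℝ (Fin 2)) (hg : g ∉ A)
    (k : ℕ) (E : Finset (Set (EuclideanSpace ℝ (Fin 2))))
    (hE : ∀ e ∈ E, e ∩ interior A = ∅)
    (hsee : ∀ q ∈ frontier A,
      (E.filter fun e => (segment ℝ g q ∩ e).Nonempty).card ≤ k) :
    ∀ p ∈ A, (E.filter fun e => (segment ℝ g p ∩ e).Nonempty).card ≤ k := by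
  intro p hp
  by_cases hpint : p ∈ interior A
  · -- p is an interior point; find the frontier point on the segment from g to p
    set f : ℝ → EuclideanSpace ℝ (Fin 2) := fun t => AffineMap.lineMap g p t with hf
    have hfc : Continuous f := AffineMap.lineMap_continuous
    set S : Set ℝ := Set.Icc (0:ℝ) 1 ∩ f ⁻¹' A with hS
    have hSclosed : IsClosed S := isClosed_Icc.inter (hAclosed.preimage hfc)
    have hSne : S.Nonempty := ⟨1, by simp, by simp [hf, hp]⟩
    have hSbdd : BddBelow S := ⟨0, fun t ht => ht.1.1⟩
    set t0 : ℝ := sInf S with ht0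
    have ht0S : t0 ∈ S := hSclosed.csInf_mem hSne hSbdd
    set q : EuclideanSpace ℝ (Fin 2) := f t0 with hq
    have hqA : q ∈ A := ht0S.2
    have ht0pos : 0 < t0 := by
      rcases lt_or_eq_of_le ht0S.1.1 with h | h
      · exact h
      · exfalso; apply hg; have : f t0 ∈ A := ht0S.2
        rw [← h] at this; simpa [hf] using this
    have hqfr : q ∈ frontier A := by
      rw [hAclosed.frontier_eq]
      refine ⟨hqA, fun hqint => ?_⟩
      have hU : f ⁻¹' interior A ∈ nhds t0 :=
        hfc.continuousAt.preimage_mem_nhds (isOpen_interior.mem_nhds hqint)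
      obtain ⟨l, hl, hIoc⟩ := exists_Ioc_subset_of_mem_nhds hU ⟨0, ht0pos⟩
      obtain ⟨t, htl, htt0⟩ := exists_between (max_lt hl ht0pos : max l 0 < t0)
      have htS : t ∈ S := by
        refine ⟨⟨le_of_lt (lt_of_le_of_lt (le_max_right l 0) htl), htt0.le.trans ht0S.1.2⟩, ?_⟩
        exact (interior_subset : interior A ⊆ A) (hIoc ⟨lt_of_le_of_lt (le_max_left l 0) htl, htt0.le⟩)
      exact absurd (csInf_le hSbdd htS) (not_le.mpr htt0)
    -- every obstacle meeting segment g p meets segment g q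
    have key : ∀ e ∈ E, (segment ℝ g p ∩ e).Nonempty → (segment ℝ g q ∩ e).Nonempty := by
      intro e he ⟨x, hxseg, hxe⟩
      have hxnotint : x ∉ interior A := fun hx =>
        Set.eq_empty_iff_forall_notMem.mp (hE e he) x ⟨hxe, hx⟩
      rw [← insert_endpoints_openSegment] at hxseg
      rcases hxseg with rfl | rfl | hxo
      · exact ⟨x, left_mem_segment ℝ x q, hxe⟩
      · exact absurd hpint hxnotint
      · have := openSegment_subset_union g p (⟨t0, rfl⟩ :
          q ∈ Set.range (AffineMap.lineMap g p : ℝ → EuclideanSpace ℝ (Fin 2))) hxo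
        rcases this with hxq | hgx | hxp
        · exact ⟨q, right_mem_segment ℝ g q, hxq ▸ hxe⟩
        · exact ⟨x, openSegment_subset_segment ℝ g q hgx, hxe⟩
        · exact absurd
            (hA.openSegment_closure_interior_subset_interior (subset_closure hqA) hpint hxp)
            hxnotint
    calc (E.filter fun e => (segment ℝ g p ∩ e).Nonempty).card
        ≤ (E.filter fun e => (segment ℝ g q ∩ e).Nonempty).card := by
          apply Finset.card_le_card
          intro e hmem
          rw [Finset.mem_filter] at hmem ⊢
          exact ⟨hmem.1, key e hmem.1 hmem.2⟩
      _ ≤ k := hsee q hqfr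
  · exact hsee p (by rw [hAclosed.frontier_eq]; exact ⟨hp, hpint⟩)
end

section
/- Let p₀, p₁, p₂, p₃ be four pairwise distinct points in the plane ℝ² forming a simple quadrilateral: the four edges are the closed segments e₀ = [p₀,p₁], e₁ = [p₁,p₂], e₂ = [p₂,p₃], e₃ = [p₃,p₀]; each pair of consecutive edges intersects exactly in their shared vertex (e₀ ∩ e₁ = {p₁}, e₁ ∩ e₂ = {p₂}, e₂ ∩ e₃ = {p₃}, e₃ ∩ e₀ = {p₀}); and each pair of opposite edges is disjoint (e₀ ∩ e₂ = ∅ and e₁ ∩ e₃ = ∅). Then at most one of the four vertices lies in the convex hull of the other three vertices. -/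
lemma lemA {V : Type*} [AddCommGroup V] [Module ℝ V] {a b c d : V} (hab : a ≠ b)
    (ha : a ∈ convexHull ℝ ({b, c, d} : Set V))
    (hb : b ∈ convexHull ℝ ({a, c, d} : Set V)) :
    a ∈ segment ℝ c d := by
  rw [show ({b, c, d} : Set V) = insert b {c, d} from rfl,
      convexHull_insert ⟨c, by simp⟩, convexHull_pair] at ha
  rw [show ({a, c, d} : Set V) = insert a {c, d} from rfl,
      convexHull_insert ⟨c, by simp⟩, convexHull_pair] at hb
  rw [mem_convexJoin] at ha hb
  obtain ⟨x, hx, z, hz, haz⟩ := ha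
  obtain ⟨y, hy, w, hw, hbw⟩ := hb
  rw [Set.mem_singleton_iff] at hx hy
  rw [hx] at haz; rw [hy] at hbw
  obtain ⟨s1, s2, hs1, hs2, hs, hEa⟩ := haz
  obtain ⟨t1, t2, ht1, ht2, ht, hEb⟩ := hbw
  have hs1le : s1 ≤ 1 := by linarith
  have ht1le : t1 ≤ 1 := by linarith
  by_cases h1 : s1 * t1 = 1
  · have hs1' : s1 = 1 := by nlinarith
    have ht1' : t1 = 1 := by nlinarith
    have hs2' : s2 = 0 := by linarith
    rw [hs1', hs2'] at hEa
    simp at hEa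
    exact absurd hEa.symm hab
  · have hle : s1 * t1 ≤ 1 := by nlinarith
    have hu : 0 < 1 - s1 * t1 := by
      rcases lt_or_eq_of_le hle with h | h
      · linarith
      · exact absurd h h1
    have key : (1 - s1 * t1) • a = (s1 * t2) • w + s2 • z := by
      linear_combination (norm := module) -hEa - s1 • hEb
    set u := 1 - s1 * t1 with hudef
    have ha2 : a = (u⁻¹ * (s1 * t2)) • w + (u⁻¹ * s2) • z := by
      have h2 : u⁻¹ • (u • a) = u⁻¹ • ((s1 * t2) • w + s2 • z) := by rw [key]
      rwa [smul_smul, inv_mul_cancel₀ (ne_of_gt hu), one_smul, smul_add, smul_smul, smul_smul] at h2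
    have hsum : u⁻¹ * (s1 * t2) + u⁻¹ * s2 = 1 := by
      have h3 : s1 * t2 + s2 = u := by rw [hudef]; nlinarith
      field_simp
      linarith
    rw [ha2]
    exact convex_segment c d hw hz
      (by positivity) (by positivity) hsum

lemma lemB {V : Type*} [AddCommGroup V] [Module ℝ V] {a b c d : V}
    (hab : a ≠ b) (hcb : c ≠ b) (hac : a ≠ c)
    (ha : a ∈ segment ℝ b d) (hc : c ∈ segment ℝ b d)
    (h02 : segment ℝ a b ∩ segment ℝ c d = ∅)
    (h13 : segment ℝ b c ∩ segment ℝ d a = ∅) : False := by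
  obtain ⟨s1, s, hs1, hs, hsum, hEa⟩ := ha
  obtain ⟨t1, t, ht1, ht, htsum, hEc⟩ := hc
  have hs1' : s1 = 1 - s := by linarith
  have ht1' : t1 = 1 - t := by linarith
  subst hs1'; subst ht1'
  have hs0 : s ≠ 0 := by
    rintro rfl
    apply hab
    rw [← hEa]; simp
  have ht0 : t ≠ 0 := by
    rintro rfl
    apply hcb
    rw [← hEc]; simp
  have hspos : 0 < s := lt_of_le_of_ne hs (Ne.symm hs0)
  have htpos : 0 < t := lt_of_le_of_ne ht (Ne.symm ht0)
  rcases lt_trichotomy s t with h | h | h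
  · -- s < t : a ∈ segment b c
    have hmem : a ∈ segment ℝ b c := by
      refine ⟨1 - s / t, s / t, ?_, by positivity, by ring, ?_⟩
      · have : s / t ≤ 1 := by
          rw [div_le_one htpos]; linarith
        linarith
      · rw [← hEc, ← hEa]
        match_scalars
        · field_simp; ring
        · field_simp
    have hmem2 : a ∈ segment ℝ b c ∩ segment ℝ d a :=
      ⟨hmem, right_mem_segment ℝ d a⟩
    rw [h13] at hmem2
    exact hmem2
  · apply hac
    rw [← hEa, ← hEc, h]
  · -- t < s : c ∈ segment a b
    have hmem : c ∈ segment ℝ a b := by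
      refine ⟨t / s, 1 - t / s, by positivity, ?_, by ring, ?_⟩
      · have : t / s ≤ 1 := by
          rw [div_le_one hspos]; linarith
        linarith
      · rw [← hEa, ← hEc]
        match_scalars
        · field_simp; ring
        · field_simp
    have hmem2 : c ∈ segment ℝ a b ∩ segment ℝ c d :=
      ⟨hmem, left_mem_segment ℝ c d⟩
    rw [h02] at hmem2
    exact hmem2

lemma quadAdj {V : Type*} [AddCommGroup V] [Module ℝ V] {a b c d : V}
    (hab : a ≠ b) (had : a ≠ d)
    (h23 : segment ℝ c d ∩ segment ℝ d a = {d})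
    (ha : a ∈ convexHull ℝ ({b, c, d} : Set V))
    (hb : b ∈ convexHull ℝ ({a, c, d} : Set V)) : False := by
  have h := lemA hab ha hb
  have hm : a ∈ segment ℝ c d ∩ segment ℝ d a := ⟨h, right_mem_segment ℝ d a⟩
  rw [h23, Set.mem_singleton_iff] at hm
  exact had hm

lemma quadOpp {V : Type*} [AddCommGroup V] [Module ℝ V] {a b c d : V}
    (hab : a ≠ b) (hcb : c ≠ b) (hac : a ≠ c)
    (h02 : segment ℝ a b ∩ segment ℝ c d = ∅)
    (h13 : segment ℝ b c ∩ segment ℝ d a = ∅)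
    (ha : a ∈ convexHull ℝ ({c, b, d} : Set V))
    (hc : c ∈ convexHull ℝ ({a, b, d} : Set V)) : False := by
  have h1 : a ∈ segment ℝ b d := lemA hac ha hc
  have h2 : c ∈ segment ℝ b d := lemA hac.symm hc ha
  exact lemB hab hcb hac h1 h2 h02 h13

lemma img3 {V : Type*} (p : Fin 4 → V) (i x y z : Fin 4)
    (h : ({j : Fin 4 | j ≠ i} : Set (Fin 4)) = {x, y, z}) :
    p '' {j | j ≠ i} = {p x, p y, p z} := by
  rw [h, Set.image_insert_eq, Set.image_insert_eq, Set.image_singleton]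

/-- Observation 1: a simple quadrilateral has at most one reflex vertex, i.e. at most
one of the four vertices lies in the convex hull of the other three. -/
theorem simple_quadrilateral_at_most_one_reflex
    (p : Fin 4 → EuclideanSpace ℝ (Fin 2))
    (hinj : Function.Injective p)
    (hconsec : ∀ i : Fin 4,
      segment ℝ (p i) (p (i + 1)) ∩ segment ℝ (p (i + 1)) (p (i + 2)) = {p (i + 1)})
    (hopp : ∀ i : Fin 4,
      segment ℝ (p i) (p (i + 1)) ∩ segment ℝ (p (i + 2)) (p (i + 3)) = ∅) :
    {i : Fin 4 | p i ∈ convexHull ℝ (p '' {j | j ≠ i})}.Subsingleton := by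
  have hc0 : segment ℝ (p 0) (p 1) ∩ segment ℝ (p 1) (p 2) = {p 1} := hconsec 0
  have hc1 : segment ℝ (p 1) (p 2) ∩ segment ℝ (p 2) (p 3) = {p 2} := hconsec 1
  have hc2 : segment ℝ (p 2) (p 3) ∩ segment ℝ (p 3) (p 0) = {p 3} := hconsec 2
  have hc3 : segment ℝ (p 3) (p 0) ∩ segment ℝ (p 0) (p 1) = {p 0} := hconsec 3
  have ho0 : segment ℝ (p 0) (p 1) ∩ segment ℝ (p 2) (p 3) = ∅ := hopp 0
  have ho1 : segment ℝ (p 1) (p 2) ∩ segment ℝ (p 3) (p 0) = ∅ := hopp 1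
  have ho0' : segment ℝ (p 2) (p 3) ∩ segment ℝ (p 0) (p 1) = ∅ := by
    rw [Set.inter_comm]; exact ho0
  intro i hi j hj
  simp only [Set.mem_setOf_eq] at hi hj
  by_contra hne
  have eset : ∀ i x y z : Fin 4, (∀ k : Fin 4, k ≠ i ↔ (k = x ∨ k = y ∨ k = z)) →
      ({j : Fin 4 | j ≠ i} : Set (Fin 4)) = {x, y, z} := by
    intro i x y z h
    ext k
    simp only [Set.mem_setOf_eq, Set.mem_insert_iff, Set.mem_singleton_iff]
    exact h k
  have hi4 : i = 0 ∨ i = 1 ∨ i = 2 ∨ i = 3 := by omega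
  have hj4 : j = 0 ∨ j = 1 ∨ j = 2 ∨ j = 3 := by omega
  rcases hi4 with rfl | rfl | rfl | rfl <;> rcases hj4 with rfl | rfl | rfl | rfl
  · exact hne rfl
  · -- (0,1)
    rw [img3 p 0 1 2 3 (eset 0 1 2 3 (by decide))] at hi
    rw [img3 p 1 0 2 3 (eset 1 0 2 3 (by decide))] at hj
    exact quadAdj (hinj.ne (by decide)) (hinj.ne (by decide)) hc2 hi hj
  · -- (0,2)
    rw [img3 p 0 2 1 3 (eset 0 2 1 3 (by decide))] at hi
    rw [img3 p 2 0 1 3 (eset 2 0 1 3 (by decide))] at hj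
    exact quadOpp (hinj.ne (by decide)) (hinj.ne (by decide)) (hinj.ne (by decide)) ho0 ho1 hi hj
  · -- (0,3)
    rw [img3 p 0 3 1 2 (eset 0 3 1 2 (by decide))] at hi
    rw [img3 p 3 0 1 2 (eset 3 0 1 2 (by decide))] at hj
    exact quadAdj (hinj.ne (by decide)) (hinj.ne (by decide)) hc1 hj hi
  · -- (1,0)
    rw [img3 p 1 0 2 3 (eset 1 0 2 3 (by decide))] at hi
    rw [img3 p 0 1 2 3 (eset 0 1 2 3 (by decide))] at hj
    exact quadAdj (hinj.ne (by decide)) (hinj.ne (by decide)) hc2 hj hi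
  · exact hne rfl
  · -- (1,2)
    rw [img3 p 1 2 3 0 (eset 1 2 3 0 (by decide))] at hi
    rw [img3 p 2 1 3 0 (eset 2 1 3 0 (by decide))] at hj
    exact quadAdj (hinj.ne (by decide)) (hinj.ne (by decide)) hc3 hi hj
  · -- (1,3)
    rw [img3 p 1 3 2 0 (eset 1 3 2 0 (by decide))] at hi
    rw [img3 p 3 1 2 0 (eset 3 1 2 0 (by decide))] at hj
    exact quadOpp (hinj.ne (by decide)) (hinj.ne (by decide)) (hinj.ne (by decide)) ho1 ho0' hi hj
  · -- (2,0)
    rw [img3 p 2 0 1 3 (eset 2 0 1 3 (by decide))] at hi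
    rw [img3 p 0 2 1 3 (eset 0 2 1 3 (by decide))] at hj
    exact quadOpp (hinj.ne (by decide)) (hinj.ne (by decide)) (hinj.ne (by decide)) ho0 ho1 hj hi
  · -- (2,1)
    rw [img3 p 2 1 3 0 (eset 2 1 3 0 (by decide))] at hi
    rw [img3 p 1 2 3 0 (eset 1 2 3 0 (by decide))] at hj
    exact quadAdj (hinj.ne (by decide)) (hinj.ne (by decide)) hc3 hj hi
  · exact hne rfl
  · -- (2,3)
    rw [img3 p 2 3 0 1 (eset 2 3 0 1 (by decide))] at hi
    rw [img3 p 3 2 0 1 (eset 3 2 0 1 (by decide))] at hj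
    exact quadAdj (hinj.ne (by decide)) (hinj.ne (by decide)) hc0 hi hj
  · -- (3,0)
    rw [img3 p 3 0 1 2 (eset 3 0 1 2 (by decide))] at hi
    rw [img3 p 0 3 1 2 (eset 0 3 1 2 (by decide))] at hj
    exact quadAdj (hinj.ne (by decide)) (hinj.ne (by decide)) hc1 hi hj
  · -- (3,1)
    rw [img3 p 3 1 2 0 (eset 3 1 2 0 (by decide))] at hi
    rw [img3 p 1 3 2 0 (eset 1 3 2 0 (by decide))] at hj
    exact quadOpp (hinj.ne (by decide)) (hinj.ne (by decide)) (hinj.ne (by decide)) ho1 ho0' hj hi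
  · -- (3,2)
    rw [img3 p 3 2 0 1 (eset 3 2 0 1 (by decide))] at hi
    rw [img3 p 2 3 0 1 (eset 2 3 0 1 (by decide))] at hj
    exact quadAdj (hinj.ne (by decide)) (hinj.ne (by decide)) hc0 hj hi
  · exact hne rfl
end
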